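/- Let K be a commutative field with at least 4 elements, d ∈ K, and let (u₁,u₂), (v₁,v₂), (u₁',u₂'), (v₁',v₂') ∈ K² be such that u₁ ≠ v₁, u₁' ≠ v₁', δ((u₁,u₂),(v₁,v₂)) = d and δ((u₁',u₂'),(v₁',v₂')) = d. Then there exists exactly one triple (a,b,c) ∈ K × K × (K \ {0}) such that the map T_{a,b,c}(x₁,x₂) = (a + c·x₁, b + 3ac·x₁ + c²·x₂) satisfies T_{a,b,c}(u₁,u₂) = (u₁',u₂') and T_{a,b,c}(v₁,v₂) = (v₁',v₂'). That is, for each d ∈ K the group G(F) acts regularly on the set Δ_d of ordered pairs of affine points of the Cayley surface at distance d. -/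
import Mathlib


/-- The (non-symmetric) distance function on the affine part of the Cayley
surface, in the parameters `(u₁,u₂)`. -/
def cayleyDist {K : Type*} [Field K] (A B : K × K) : K :=
  (2*A.1^2 - A.2 - A.1*B.1 + B.2 - B.1^2) / (A.1 - B.1)^2

/-- The action of the matrix `M_{a,b,c}` on the affine part of the Cayley
surface, in the parameters `(x₁,x₂)`. -/
def cayleyT {K : Type*} [Field K] (a b c : K) (x : K × K) : K × K :=
  (a + c * x.1, b + 3*a*c*x.1 + c^2*x.2)

theorem stmt_18 {K : Type*} [Field K] (hK : (4 : Cardinal) ≤ Cardinal.mk K)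
    (d : K) (u v u' v' : K × K)
    (huv : u.1 ≠ v.1) (huv' : u'.1 ≠ v'.1)
    (hd : cayleyDist u v = d) (hd' : cayleyDist u' v' = d) :
    ∃! abc : K × K × K, abc.2.2 ≠ 0 ∧
      cayleyT abc.1 abc.2.1 abc.2.2 u = u' ∧
      cayleyT abc.1 abc.2.1 abc.2.2 v = v' := by
  have hs : u.1 - v.1 ≠ 0 := sub_ne_zero.mpr huv
  have hs' : u'.1 - v'.1 ≠ 0 := sub_ne_zero.mpr huv'
  have hdd : cayleyDist u v = cayleyDist u' v' := hd.trans hd'.symm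
  rw [cayleyDist, cayleyDist, div_eq_div_iff (pow_ne_zero 2 hs) (pow_ne_zero 2 hs')] at hdd
  set c : K := (u'.1 - v'.1) / (u.1 - v.1) with hc
  have hc0 : c ≠ 0 := div_ne_zero hs' hs
  have hcs : c * (u.1 - v.1) = u'.1 - v'.1 := div_mul_cancel₀ _ hs
  clear_value c
  set a : K := u'.1 - c * u.1 with ha
  set b : K := u'.2 - 3*a*c*u.1 - c^2*u.2 with hb
  refine ⟨(a, b, c), ⟨hc0, ?_, ?_⟩, ?_⟩
  · simp only [cayleyT, Prod.ext_iff]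
    constructor
    · rw [ha]; ring
    · rw [hb]; ring
  · have hdd2 : c^2 * (2*u.1^2 - u.2 - u.1*v.1 + v.2 - v.1^2)
        = 2*u'.1^2 - u'.2 - u'.1*v'.1 + v'.2 - v'.1^2 := by
      apply mul_left_cancel₀ (pow_ne_zero 2 hs)
      linear_combination hdd + (2*u.1^2 - u.2 - u.1*v.1 + v.2 - v.1^2) *
        (c*(u.1-v.1) + (u'.1-v'.1)) * hcs
    simp only [cayleyT, Prod.ext_iff]
    constructor
    · rw [ha]; linear_combination -hcs
    · rw [hb, ha]
      linear_combination hdd2 + (c*(u.1-v.1) + (u'.1-v'.1) - 3*u'.1) * hcs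
  · rintro ⟨a', b', c'⟩ ⟨hc0', h1, h2⟩
    simp only [cayleyT, Prod.ext_iff] at h1 h2
    obtain ⟨h1a, h1b⟩ := h1
    obtain ⟨h2a, h2b⟩ := h2
    have hcc : c' = c := by
      apply mul_right_cancel₀ hs
      rw [hcs]
      linear_combination h1a - h2a
    have haa : a' = a := by
      rw [ha, ← hcc]
      linear_combination h1a
    have hbb : b' = b := by
      rw [hb, ← hcc, ← haa]
      linear_combination h1b
    simp [Prod.ext_iff, hcc, haa, hbb]
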